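/- arXiv:2109.09623 — 3 statements merged into one kernel-verified Lean document; each statement's English description precedes it below -/
import Mathlib

section
/- Let R₁, R₂, R₁₂ be commutative rings with ring homomorphisms R₁ → R₁₂ and R₂ → R₁₂ such that R₁₂ is flat as an R₁-module and as an R₂-module, and such that the multiplication map R₁₂ ⊗_{R₂} R₁₂ → R₁₂ is bijective. Then for every triple (M₁, M₂, φ), where M₁ is a finitely generated R₁-module, M₂ is a finitely generated R₂-module, and φ : M₁ ⊗_{R₁} R₁₂ → M₂ ⊗_{R₂} R₁₂ is an R₁₂-linear isomorphism, there exist an integer n ≥ 0, an R₁₂-linear automorphism α of R₁₂ⁿ, a surjective R₁-linear map f₁ : R₁ⁿ → M₁ and a surjective R₂-linear map f₂ : R₂ⁿ → M₂ such that, under the canonical identifications R₁ⁿ ⊗_{R₁} R₁₂ ≅ R₁₂ⁿ and R₂ⁿ ⊗_{R₂} R₁₂ ≅ R₁₂ⁿ, one has φ ∘ (f₁ ⊗ id_{R₁₂}) = (f₂ ⊗ id_{R₁₂}) ∘ α. -/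
/-!
Choose surjections `g₁ : R₁^{n₁} → M₁` and `g₂ : R₂^{n₂} → M₂`. After base change,
`u = φ ∘ (g₁ ⊗ id)` and `v = g₂ ⊗ id` are two surjections of free `R₁₂`-modules onto
`R₁₂ ⊗ M₂`, so by projectivity each lifts through the other: `u = v ∘ a` and `v = u ∘ b`. On `R₁₂^{n₁} ⊕ R₁₂^{n₂}` the automorphism
`(p, q) ↦ (p - b q, q + a (p - b q))` then intertwines `u ∘ pr₁` with `v ∘ pr₂`, and we take
`n = n₁ + n₂`, `f₁ = g₁ ∘ pr₁`, `f₂ = g₂ ∘ pr₂`.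
-/

open TensorProduct

/-- The canonical `R₁₂`-linear identification `R₁₂ ⊗[R] (Fin n → R) ≃ (Fin n → R₁₂)`
coming from the standard basis of `Fin n → R`. -/
noncomputable def freeBaseChangeEquiv (R R₁₂ : Type*) [CommRing R] [CommRing R₁₂]
    [Algebra R R₁₂] (n : ℕ) :
    (R₁₂ ⊗[R] (Fin n → R)) ≃ₗ[R₁₂] (Fin n → R₁₂) :=
  (Algebra.TensorProduct.basis R₁₂ (Pi.basisFun R (Fin n))).equivFun

theorem Module.Projective.exists_linearEquiv_comp_fst_eq_comp_snd {A P Q N : Type*} [Ring A]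
    [AddCommGroup P] [AddCommGroup Q] [AddCommGroup N] [Module A P] [Module A Q] [Module A N]
    [Module.Projective A P] [Module.Projective A Q] {u : P →ₗ[A] N} {v : Q →ₗ[A] N}
    (hu : Function.Surjective u) (hv : Function.Surjective v) :
    ∃ α : (P × Q) ≃ₗ[A] (P × Q), u ∘ₗ LinearMap.fst A P Q = v ∘ₗ LinearMap.snd A P Q ∘ₗ α := by
  obtain ⟨a, hva⟩ := Module.projective_lifting_property v u hv
  obtain ⟨b, hub⟩ := Module.projective_lifting_property u v hu
  let α := ((LinearEquiv.prodComm A P Q).trans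
      ((LinearEquiv.refl A Q).skewProd (.refl A P) (-b))).trans
    ((LinearEquiv.prodComm A Q P).trans ((LinearEquiv.refl A P).skewProd (.refl A Q) a))
  have hα : ∀ x, α x = (x.1 - b x.2, x.2 + a (x.1 - b x.2)) := fun x => by
    simp [α, sub_eq_add_neg]
  refine ⟨α, LinearMap.ext fun x => ?_⟩
  calc u x.1 = v x.2 + u (x.1 - b x.2) := by
        rw [map_sub, ← LinearMap.comp_apply u b, hub]; abel
    _ = v (x.2 + a (x.1 - b x.2)) := by rw [map_add, ← LinearMap.comp_apply v a, hva]
    _ = v (α x).2 := by rw [hα]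

section FreeBaseChange

variable (R A : Type*) [CommRing R] [CommRing A] [Algebra R A]

theorem freeBaseChangeEquiv_tmul {n : ℕ} (a : A) (x : Fin n → R) :
    freeBaseChangeEquiv R A n (a ⊗ₜ x) = a • (algebraMap R A ∘ x) := by
  ext i
  simp [freeBaseChangeEquiv]

theorem freeBaseChangeEquiv_baseChange_funLeft {n k : ℕ} (e : Fin k → Fin n)
    (x : A ⊗[R] (Fin n → R)) :
    freeBaseChangeEquiv R A k ((LinearMap.funLeft R R e).baseChange A x) =
      freeBaseChangeEquiv R A n x ∘ e := by
  induction x using TensorProduct.induction_on with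
  | zero => simp
  | tmul a x => ext; simp [freeBaseChangeEquiv_tmul, LinearMap.funLeft_apply]
  | add x y hx hy => simp only [map_add, hx, hy]; rfl

theorem baseChange_funLeft_freeBaseChangeEquiv_symm {n k : ℕ} (e : Fin k → Fin n)
    (c : Fin n → A) :
    (LinearMap.funLeft R R e).baseChange A ((freeBaseChangeEquiv R A n).symm c) =
      (freeBaseChangeEquiv R A k).symm (c ∘ e) := by
  rw [LinearEquiv.eq_symm_apply, freeBaseChangeEquiv_baseChange_funLeft,
    LinearEquiv.apply_symm_apply]

end FreeBaseChange

section FinAddArrow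

variable (R M : Type*) [Semiring R] [AddCommMonoid M] [Module R M]

def finAddArrowLequivProdArrow (m k : ℕ) :
    (Fin (m + k) → M) ≃ₗ[R] (Fin m → M) × (Fin k → M) :=
  (LinearEquiv.funCongrLeft R M finSumFinEquiv).trans (LinearEquiv.sumArrowLequivProdArrow _ _ R M)

theorem finAddArrowLequivProdArrow_symm_apply_comp_natAdd {m k : ℕ}
    (p : (Fin m → M) × (Fin k → M)) :
    (finAddArrowLequivProdArrow R M m k).symm p ∘ Fin.natAdd m = p.2 :=
  congrArg Prod.snd ((finAddArrowLequivProdArrow R M m k).apply_symm_apply p)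

end FinAddArrow

theorem triple_quotient_of_free_triple_general
    {R₁ R₂ R₁₂ : Type*} [CommRing R₁] [CommRing R₂] [CommRing R₁₂]
    [Algebra R₁ R₁₂] [Algebra R₂ R₁₂]
    {M₁ M₂ : Type*} [AddCommGroup M₁] [Module R₁ M₁] [AddCommGroup M₂] [Module R₂ M₂]
    [Module.Finite R₁ M₁] [Module.Finite R₂ M₂]
    (φ : R₁₂ ⊗[R₁] M₁ ≃ₗ[R₁₂] R₁₂ ⊗[R₂] M₂) :
    ∃ (n : ℕ) (α : (Fin n → R₁₂) ≃ₗ[R₁₂] (Fin n → R₁₂))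
      (f₁ : (Fin n → R₁) →ₗ[R₁] M₁) (f₂ : (Fin n → R₂) →ₗ[R₂] M₂),
      Function.Surjective f₁ ∧ Function.Surjective f₂ ∧
        φ.toLinearMap ∘ₗ f₁.baseChange R₁₂ ∘ₗ (freeBaseChangeEquiv R₁ R₁₂ n).symm.toLinearMap
          = f₂.baseChange R₁₂ ∘ₗ (freeBaseChangeEquiv R₂ R₁₂ n).symm.toLinearMap
              ∘ₗ α.toLinearMap := by
  obtain ⟨n₁, g₁, hg₁⟩ := Module.Finite.exists_fin' R₁ M₁
  obtain ⟨n₂, g₂, hg₂⟩ := Module.Finite.exists_fin' R₂ M₂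
  obtain ⟨α, hα⟩ := Module.Projective.exists_linearEquiv_comp_fst_eq_comp_snd
    (u := φ.toLinearMap ∘ₗ g₁.baseChange R₁₂ ∘ₗ (freeBaseChangeEquiv R₁ R₁₂ n₁).symm.toLinearMap)
    (v := g₂.baseChange R₁₂ ∘ₗ (freeBaseChangeEquiv R₂ R₁₂ n₂).symm.toLinearMap)
    (φ.surjective.comp <| (g₁.baseChange_surjective R₁₂ hg₁).comp (LinearEquiv.surjective _))
    ((g₂.baseChange_surjective R₁₂ hg₂).comp (LinearEquiv.surjective _))
  let s := finAddArrowLequivProdArrow R₁₂ R₁₂ n₁ n₂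
  refine ⟨n₁ + n₂, s.trans (α.trans s.symm), g₁ ∘ₗ LinearMap.funLeft R₁ R₁ (Fin.castAdd n₂),
    g₂ ∘ₗ LinearMap.funLeft R₂ R₂ (Fin.natAdd n₁),
    hg₁.comp (LinearMap.funLeft_surjective_of_injective _ _ _ (Fin.castAdd_injective _ _)),
    hg₂.comp (LinearMap.funLeft_surjective_of_injective _ _ _ (Fin.natAdd_injective _ _)), ?_⟩
  refine LinearMap.ext fun c => ?_
  simp only [LinearMap.comp_apply, LinearEquiv.coe_coe, LinearMap.baseChange_comp,
    baseChange_funLeft_freeBaseChangeEquiv_symm, LinearEquiv.trans_apply,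
    s, finAddArrowLequivProdArrow_symm_apply_comp_natAdd]
  exact LinearMap.congr_fun hα (s c)

/-- Let `R₁, R₂, R₁₂` be commutative rings with ring homomorphisms `R₁ → R₁₂` and
`R₂ → R₁₂` (given as algebra structures) such that `R₁₂` is flat over `R₁` and over
`R₂`, and such that the multiplication map `R₁₂ ⊗[R₂] R₁₂ → R₁₂` is bijective.  Then
every triple `(M₁, M₂, φ)` — with `M₁` a finitely generated `R₁`-module, `M₂` a
finitely generated `R₂`-module and `φ : M₁ ⊗ R₁₂ ≃ M₂ ⊗ R₁₂` an `R₁₂`-linear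
isomorphism (written with the ring on the left) — is a quotient of a triple
`(R₁ⁿ, R₂ⁿ, α)` for some `n ≥ 0` and some `R₁₂`-linear automorphism `α` of `R₁₂ⁿ`:
there are surjections `f₁ : R₁ⁿ → M₁` and `f₂ : R₂ⁿ → M₂` with
`φ ∘ (f₁ ⊗ id) = (f₂ ⊗ id) ∘ α` under the canonical identifications
`R₁ⁿ ⊗ R₁₂ ≅ R₁₂ⁿ ≅ R₂ⁿ ⊗ R₁₂`. -/
theorem triple_quotient_of_free_triple
    {R₁ R₂ R₁₂ : Type*} [CommRing R₁] [CommRing R₂] [CommRing R₁₂]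
    [Algebra R₁ R₁₂] [Algebra R₂ R₁₂]
    [Module.Flat R₁ R₁₂] [Module.Flat R₂ R₁₂]
    (hmul : Function.Bijective (LinearMap.mul' R₂ R₁₂))
    {M₁ M₂ : Type*} [AddCommGroup M₁] [Module R₁ M₁] [AddCommGroup M₂] [Module R₂ M₂]
    [Module.Finite R₁ M₁] [Module.Finite R₂ M₂]
    (φ : R₁₂ ⊗[R₁] M₁ ≃ₗ[R₁₂] R₁₂ ⊗[R₂] M₂) :
    ∃ (n : ℕ) (α : (Fin n → R₁₂) ≃ₗ[R₁₂] (Fin n → R₁₂))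
      (f₁ : (Fin n → R₁) →ₗ[R₁] M₁) (f₂ : (Fin n → R₂) →ₗ[R₂] M₂),
      Function.Surjective f₁ ∧ Function.Surjective f₂ ∧
        φ.toLinearMap ∘ₗ f₁.baseChange R₁₂ ∘ₗ (freeBaseChangeEquiv R₁ R₁₂ n).symm.toLinearMap
          = f₂.baseChange R₁₂ ∘ₗ (freeBaseChangeEquiv R₂ R₁₂ n).symm.toLinearMap
              ∘ₗ α.toLinearMap :=
  triple_quotient_of_free_triple_general φ
end

section
/- Let B be a noetherian commutative ring, I ⊆ B an ideal, and let B̂ = AdicCompletion I B be the I-adic completion of B, with its canonical ring homomorphism B → B̂. Then a prime ideal p ⊆ B lies in the image of the induced map Spec(B̂) → Spec(B) if and only if p + I ≠ B. -/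
open AdicCompletion

section AuxUnit

variable {B : Type*} [CommRing B] (I : Ideal B)

/-- The image in the adic completion of `1 - i`, for `i ∈ I`, is a unit
(its inverse is the geometric series). -/
theorem isUnit_one_sub_algebraMap_adicCompletion {i : B} (hi : i ∈ I) :
    IsUnit (1 - algebraMap B (AdicCompletion I B) i) := by
  have hc : ∀ n, (∑ k ∈ Finset.range n, i ^ k) ≡ (∑ k ∈ Finset.range (n+1), i ^ k)
      [SMOD (I ^ n • ⊤ : Submodule B B)] := by
    intro n
    rw [SModEq.sub_mem, Finset.sum_range_succ]
    simp only [smul_eq_mul, Ideal.mul_top]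
    have : i ^ n ∈ I ^ n := Ideal.pow_mem_pow hi n
    simpa using Submodule.neg_mem _ this
  set c : AdicCauchySequence I B :=
    AdicCauchySequence.mk I B (fun n => ∑ k ∈ Finset.range n, i ^ k) hc
  refine IsUnit.of_mul_eq_one (AdicCompletion.mk I B c) ?_
  ext n
  have hval : ((1 - algebraMap B (AdicCompletion I B) i) * AdicCompletion.mk I B c).val n
      = (1 - (Ideal.Quotient.mk (I ^ n • ⊤ : Ideal B) i)) * Ideal.Quotient.mk _ (c n) := by
    rw [val_mul, val_sub]
    rfl
  rw [hval, val_one]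
  have : (1 - i) * (∑ k ∈ Finset.range n, i ^ k) = 1 - i ^ n := by
    have := geom_sum_mul i n
    linear_combination -this
  have hcn : (c n : B) = ∑ k ∈ Finset.range n, i ^ k := rfl
  rw [← map_one (Ideal.Quotient.mk (I ^ n • ⊤ : Ideal B)), ← map_sub, ← map_mul, hcn, this]
  rw [Ideal.Quotient.mk_eq_mk_iff_sub_mem]
  simp only [smul_eq_mul, Ideal.mul_top]
  simpa using Submodule.neg_mem _ (Ideal.pow_mem_pow hi n)

end AuxUnit

section AuxMap

variable {B : Type*} [CommRing B] (I p : Ideal B)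

/-- The induced map on quotients `B ⧸ Iⁿ →+* (B ⧸ p) ⧸ Jⁿ` where `J` is the image of `I`. -/
noncomputable def quotCompMap (n : ℕ) :
    B ⧸ (I ^ n • ⊤ : Ideal B) →+*
      (B ⧸ p) ⧸ ((I.map (Ideal.Quotient.mk p)) ^ n • ⊤ : Ideal (B ⧸ p)) :=
  Ideal.quotientMap _ (Ideal.Quotient.mk p) (by
    simp only [smul_eq_mul, Ideal.mul_top]
    rw [← Ideal.map_pow]
    exact Ideal.le_comap_map)

/-- The induced ring map `AdicCompletion I B →+* AdicCompletion J (B ⧸ p)`. -/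
noncomputable def compMap :
    AdicCompletion I B →+* AdicCompletion (I.map (Ideal.Quotient.mk p)) (B ⧸ p) where
  toFun x := ⟨fun n => quotCompMap I p n (x.val n), by
    intro m n hmn
    show transitionMap _ _ hmn (quotCompMap I p n (x.val n)) = quotCompMap I p m (x.val m)
    rw [← x.property hmn]
    obtain ⟨b, hb⟩ := Ideal.Quotient.mk_surjective (x.val n)
    rw [← hb]
    show transitionMap _ _ hmn (quotCompMap I p n (Ideal.Quotient.mk _ b)) =
      quotCompMap I p m (transitionMap I B hmn (Ideal.Quotient.mk _ b))
    simp only [quotCompMap, Ideal.quotientMap_mk, AdicCompletion.transitionMap_ideal_mk]⟩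
  map_one' := Subtype.ext <| funext fun n => map_one (quotCompMap I p n)
  map_mul' x y := Subtype.ext <| funext fun n => map_mul (quotCompMap I p n) (x.val n) (y.val n)
  map_zero' := Subtype.ext <| funext fun n => map_zero (quotCompMap I p n)
  map_add' x y := Subtype.ext <| funext fun n => map_add (quotCompMap I p n) (x.val n) (y.val n)

theorem compMap_algebraMap (b : B) :
    compMap I p (algebraMap B (AdicCompletion I B) b) =
      algebraMap (B ⧸ p) (AdicCompletion (I.map (Ideal.Quotient.mk p)) (B ⧸ p))
        (Ideal.Quotient.mk p b) :=
  Subtype.ext <| funext fun n => by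
    show quotCompMap I p n (Ideal.Quotient.mk _ b) =
      Ideal.Quotient.mk _ (Ideal.Quotient.mk p b)
    simp [quotCompMap, Ideal.quotientMap_mk]

end AuxMap

/-- Let `B` be a noetherian commutative ring, `I ⊆ B` an ideal, and `B̂ = AdicCompletion I B`
the `I`-adic completion with its canonical map `B → B̂`.  Then a prime ideal `p ⊆ B` lies in
the image of the induced map `Spec B̂ → Spec B` (i.e. `p` is the contraction of a prime of
`B̂`) if and only if `p + I ≠ B`. -/
theorem mem_image_spec_adicCompletion_iff {B : Type*} [CommRing B] [IsNoetherianRing B]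
    (I : Ideal B) (p : Ideal B) (hp : p.IsPrime) :
    (∃ q : Ideal (AdicCompletion I B), q.IsPrime ∧
        q.comap (algebraMap B (AdicCompletion I B)) = p) ↔ p ⊔ I ≠ ⊤ := by
  constructor
  · rintro ⟨q, hq, hqp⟩ htop
    have h1 : (1 : B) ∈ p ⊔ I := htop ▸ Submodule.mem_top
    obtain ⟨x, hx, i, hi, hxi⟩ := Submodule.mem_sup.mp h1
    have hxq : algebraMap B (AdicCompletion I B) x ∈ q := by
      rw [← hqp] at hx; exact hx
    have hu : IsUnit (1 - algebraMap B (AdicCompletion I B) i) :=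
      isUnit_one_sub_algebraMap_adicCompletion I hi
    have : algebraMap B (AdicCompletion I B) x = 1 - algebraMap B (AdicCompletion I B) i := by
      rw [eq_sub_iff_add_eq, ← map_add, hxi, map_one]
    rw [this] at hxq
    exact hq.ne_top (q.eq_top_of_isUnit_mem hxq hu)
  · intro hne
    haveI := hp
    set P := Ideal.Quotient.mk p with hP
    set J := I.map P with hJdef
    have hJtop : J ≠ ⊤ := by
      intro h
      apply hne
      have h2 := congrArg (Ideal.comap P) h
      rw [hJdef, Ideal.comap_map_of_surjective P Ideal.Quotient.mk_surjective,
        Ideal.comap_top, ← RingHom.ker_eq_comap_bot, hP, Ideal.mk_ker] at h2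
      rw [sup_comm]
      exact h2
    have hKrull : (⨅ n : ℕ, J ^ n) = ⊥ := Ideal.iInf_pow_eq_bot_of_isDomain J hJtop
    have hinj : Function.Injective (algebraMap (B ⧸ p) (AdicCompletion J (B ⧸ p))) := by
      rw [injective_iff_map_eq_zero]
      intro a ha
      have hmem : ∀ n : ℕ, a ∈ (J ^ n : Ideal (B ⧸ p)) := by
        intro n
        have h3 := congrArg (fun x : AdicCompletion J (B ⧸ p) => x.val n) ha
        simp only [val_zero] at h3
        have h4 : Ideal.Quotient.mk (J ^ n • ⊤ : Ideal (B ⧸ p)) a = 0 := h3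
        rw [Ideal.Quotient.eq_zero_iff_mem] at h4
        simpa only [smul_eq_mul, Ideal.mul_top] using h4
      have : a ∈ (⨅ n : ℕ, J ^ n) := Ideal.mem_iInf.mpr hmem
      rwa [hKrull, Ideal.mem_bot] at this
    let φ := compMap I p
    let f := φ.comp (algebraMap B (AdicCompletion I B))
    have hf : ∀ b : B, f b = algebraMap (B ⧸ p) (AdicCompletion J (B ⧸ p)) (P b) :=
      fun b => compMap_algebraMap I p b
    let S : Submonoid (AdicCompletion J (B ⧸ p)) := Submonoid.map f p.primeCompl
    have h0 : Disjoint ((⊥ : Ideal (AdicCompletion J (B ⧸ p))) :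
        Set (AdicCompletion J (B ⧸ p))) (SetLike.coe S) := by
      rw [Set.disjoint_left]
      rintro x hx ⟨b, hb, rfl⟩
      rw [SetLike.mem_coe, Ideal.mem_bot] at hx
      rw [hf b] at hx
      have : P b = 0 := hinj (by rw [hx, _root_.map_zero])
      rw [hP, Ideal.Quotient.eq_zero_iff_mem] at this
      exact hb this
    obtain ⟨q', hq', -, hdisj⟩ := Ideal.exists_le_prime_disjoint ⊥ S h0
    haveI := hq'
    refine ⟨q'.comap φ, Ideal.IsPrime.comap φ, ?_⟩
    ext b
    rw [Ideal.mem_comap, Ideal.mem_comap]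
    constructor
    · intro hb
      by_contra hbp
      have hbS : f b ∈ S := ⟨b, hbp, rfl⟩
      exact Set.disjoint_left.mp hdisj hb hbS
    · intro hb
      have : P b = 0 := by rw [hP, Ideal.Quotient.eq_zero_iff_mem]; exact hb
      have : f b = 0 := by rw [hf b, this, _root_.map_zero]
      show f b ∈ q'
      rw [this]
      exact q'.zero_mem
end

section
/- Let R → S be a ring homomorphism of commutative rings such that S is flat as an R-module, and let F be an R-module such that F ⊗_R S is finitely generated as an S-module. Then there exists a finitely generated R-submodule F' ⊆ F such that the canonical map F' ⊗_R S → F ⊗_R S (induced by the inclusion F' ⊆ F) is bijective. -/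
open TensorProduct

/-- Let `R → S` be a ring homomorphism of commutative rings such that `S` is flat as an
`R`-module, and let `F` be an `R`-module such that `F ⊗_R S` (written here as `S ⊗[R] F`)
is finitely generated as an `S`-module.  Then there exists a finitely generated
`R`-submodule `F' ⊆ F` such that the canonical map `F' ⊗_R S → F ⊗_R S` induced by the
inclusion is bijective. -/
theorem exists_fg_submodule_baseChange_bijective
    {R S F : Type*} [CommRing R] [CommRing S] [Algebra R S] [Module.Flat R S]
    [AddCommGroup F] [Module R F] [Module.Finite S (S ⊗[R] F)] :
    ∃ F' : Submodule R F, F'.FG ∧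
      Function.Bijective (F'.subtype.baseChange S) := by
  classical
  obtain ⟨T, hT⟩ := Module.Finite.fg_top (R := S) (M := S ⊗[R] F)
  choose t ht using fun x : T => TensorProduct.exists_finset (R := R) (x : S ⊗[R] F)
  set B : Finset F := T.attach.biUnion fun x => (t x).image Prod.snd with hB
  refine ⟨Submodule.span R ↑B, ⟨B, rfl⟩, ?_, ?_⟩
  · have := Module.Flat.lTensor_preserves_injective_linearMap (M := S)
      (Submodule.span R (↑B : Set F)).subtype (Submodule.injective_subtype _)
    rwa [← LinearMap.baseChange_eq_ltensor] at this
  · rw [← LinearMap.range_eq_top, ← top_le_iff, ← hT, Submodule.span_le]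
    rintro x hx
    have hsum : x = ∑ p ∈ t ⟨x, hx⟩, p.1 ⊗ₜ[R] p.2 := ht ⟨x, hx⟩
    rw [SetLike.mem_coe, hsum]
    refine Submodule.sum_mem _ fun p hp => ?_
    have hmem : p.2 ∈ Submodule.span R (↑B : Set F) := by
      apply Submodule.subset_span
      simp only [hB, Finset.coe_biUnion, Finset.mem_coe, Finset.coe_image]
      exact Set.mem_iUnion.2 ⟨⟨x, hx⟩, Set.mem_iUnion.2 ⟨Finset.mem_attach _ _,
        Set.mem_image_of_mem Prod.snd hp⟩⟩
    exact ⟨p.1 ⊗ₜ ⟨p.2, hmem⟩, by simp [LinearMap.baseChange_tmul]⟩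
end
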